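/- For every p ∈ (1, ∞) there is a constant C(p) (one may take C(p) = 2^{(p+1)/p} K₀^{(p−1)/p} (p/(p−1))^{(p−1)/p}) such that for all spectral densities f ∈ L^p and g with integrable logarithms, ‖f⁺ − g⁺‖²_{H²} ≤ 2‖f − g‖_{L¹} + C(p) ‖f‖_{L^p} ‖log f − log g‖_{L¹}^{(p−1)/p}. -/

import Mathlib

/-!
With `φ = (A - B) / 2`, the pointwise estimate `‖√f e^{iA/2} - √g e^{iB/2}‖² ≤ 2|f - g| + 2f(1 - cos φ)`
reduces the claim to bounding `∫ f (1 - cos φ)`. As `0 ≤ 1 - cos φ ≤ 2`, Hölder's inequality gives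
`∫ f (1 - cos φ) ≤ 2^{1/p} ‖f‖_p (∫ (1 - cos φ))^{(p-1)/p}`. Finally `1 - cos φ ≤ ∫_0^π sin λ 𝟙{λ ≤ |φ|} dλ`,
so by Fubini `∫ (1 - cos φ) ≤ ∫_0^π sin λ |{|φ| ≥ λ}| dλ`, and the weak type (1,1) bound
`|{|φ| ≥ λ}| ≤ (K/λ) ‖(log f - log g)/2‖₁` turns this into `K₀ ‖log f - log g‖₁`.
-/

open MeasureTheory Set

noncomputable def kolmogorovK : ℝ :=
  (∑' n : ℕ, (1 : ℝ) / (2 * (n : ℝ) + 1) ^ 2) /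
    (∑' n : ℕ, (-1 : ℝ) ^ n / (2 * (n : ℝ) + 1) ^ 2)

lemma kolmogorovK_nonneg : 0 ≤ kolmogorovK := by
  have hsum : Summable fun n : ℕ => (1 : ℝ) / (2 * (n : ℝ) + 1) ^ 2 := by
    have := (Real.summable_one_div_nat_pow.2 one_lt_two).comp_injective
      (f := fun n : ℕ => (1 : ℝ) / (n : ℝ) ^ 2) (i := fun n : ℕ => 2 * n + 1)
      fun m n h => by simpa using h
    simpa [Function.comp_def] using this
  have hanti : Antitone fun n : ℕ => (1 : ℝ) / (2 * (n : ℝ) + 1) ^ 2 := fun m n hmn => by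
    dsimp only
    gcongr
  refine div_nonneg (tsum_nonneg fun n => by positivity) ?_
  have := hanti.alternating_series_le_tendsto hsum.tendsto_alternating_series_tsum 0
  simp only [mul_zero, Finset.range_zero, Finset.sum_empty, ← div_eq_mul_one_div] at this
  exact this

open Complex in
lemma norm_ofReal_mul_exp_sub_sq (u v a b : ℝ) :
    ‖(u : ℂ) * exp (I * a) - (v : ℂ) * exp (I * b)‖ ^ 2 =
      u ^ 2 + v ^ 2 - 2 * u * v * Real.cos (a - b) := by
  rw [mul_comm I, mul_comm I, exp_mul_I, exp_mul_I, ← normSq_eq_norm_sq, normSq_apply]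
  simp only [sub_re, sub_im, mul_re, mul_im, add_re, add_im, ofReal_re, ofReal_im,
    cos_ofReal_re, cos_ofReal_im, sin_ofReal_re, sin_ofReal_im, I_re, I_im]
  rw [Real.cos_sub]
  nlinarith [Real.sin_sq_add_cos_sq a, Real.sin_sq_add_cos_sq b]

lemma sq_add_sq_sub_two_mul_mul_le {u v c : ℝ} (hu : 0 ≤ u) (hv : 0 ≤ v) (hc : |c| ≤ 1) :
    u ^ 2 + v ^ 2 - 2 * u * v * c ≤ 2 * |u ^ 2 - v ^ 2| + 2 * u ^ 2 * (1 - c) := by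
  obtain ⟨hc₁, hc₂⟩ := abs_le.1 hc
  -- the left side minus `2u²(1 - c)` is `(v - u)(v + u - 2uc)`
  rcases le_total v u with h | h
  · rw [abs_of_nonneg (by nlinarith)]
    nlinarith [mul_nonneg (sub_nonneg.2 h) (by nlinarith : 0 ≤ 3 * (u + v) - 2 * u * c)]
  · rw [abs_of_nonpos (by nlinarith)]
    nlinarith [mul_nonneg (sub_nonneg.2 h) (by nlinarith : 0 ≤ v + u + 2 * u * c)]

open Complex in
lemma norm_sqrt_mul_exp_sub_sq_le {x y : ℝ} (hx : 0 ≤ x) (hy : 0 ≤ y) (a b : ℝ) :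
    ‖(√x : ℂ) * exp (I * a) - (√y : ℂ) * exp (I * b)‖ ^ 2 ≤
      2 * |x - y| + 2 * x * (1 - Real.cos (a - b)) := by
  have := sq_add_sq_sub_two_mul_mul_le (Real.sqrt_nonneg x) (Real.sqrt_nonneg y)
    (Real.abs_cos_le_one (a - b))
  rwa [← norm_ofReal_mul_exp_sub_sq, Real.sq_sqrt hx, Real.sq_sqrt hy] at this

section Integrals

open Real

lemma one_sub_cos_le_setIntegral_indicator_sin {t : ℝ} (ht : 0 ≤ t) :
    1 - cos t ≤ ∫ s in Ioc 0 π, (Iic t).indicator sin s := by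
  have hmin : 0 ≤ min π t := le_min pi_pos.le ht
  rw [setIntegral_indicator measurableSet_Iic, Ioc_inter_Iic,
    ← intervalIntegral.integral_of_le hmin, integral_sin, cos_zero]
  have : cos (min π t) ≤ cos t := by
    rcases le_total t π with h | h
    · rw [min_eq_right h]
    · rw [min_eq_left h, cos_pi]
      exact neg_one_le_cos t
  linarith

variable {α : Type*} [MeasurableSpace α] {μ : Measure α}

open Complex in
lemma integral_norm_sqrt_mul_exp_sub_sq_le {f g a b : α → ℝ} (hf₀ : ∀ x, 0 ≤ f x)
    (hg₀ : ∀ x, 0 ≤ g x) (hf : Integrable f μ) (hg : Integrable g μ) (ha : Measurable a)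
    (hb : Measurable b) :
    ∫ x, ‖(√(f x) : ℂ) * exp (I * a x) - (√(g x) : ℂ) * exp (I * b x)‖ ^ 2 ∂μ ≤
      2 * ∫ x, |f x - g x| ∂μ + 2 * ∫ x, f x * (1 - Real.cos (a x - b x)) ∂μ := by
  have hfg : Integrable (fun x => |f x - g x|) μ := (hf.sub hg).abs
  have hfh : Integrable (fun x => f x * (1 - Real.cos (a x - b x))) μ :=
    hf.mul_bdd (c := 2)
      (measurable_const.sub (measurable_cos.comp (ha.sub hb))).aestronglyMeasurable
      (ae_of_all _ fun x => by
        rw [Real.norm_of_nonneg (sub_nonneg.2 (Real.cos_le_one _))]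
        linarith [Real.neg_one_le_cos (a x - b x)])
  rw [← integral_const_mul, ← integral_const_mul, ← integral_add (hfg.const_mul 2)
    (hfh.const_mul 2)]
  refine integral_mono_of_nonneg (ae_of_all _ fun _ => by positivity)
    ((hfg.const_mul 2).add (hfh.const_mul 2)) (ae_of_all _ fun x => ?_)
  exact (norm_sqrt_mul_exp_sub_sq_le (hf₀ x) (hg₀ x) _ _).trans_eq (by rw [mul_assoc])

lemma integral_rpow_le_mul_integral_of_le {h : α → ℝ} {q M : ℝ} (hq : 1 ≤ q)
    (hh₀ : ∀ x, 0 ≤ h x) (hhM : ∀ x, h x ≤ M) (hint : Integrable h μ) :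
    ∫ x, h x ^ q ∂μ ≤ M ^ (q - 1) * ∫ x, h x ∂μ := by
  rw [← integral_const_mul]
  refine integral_mono_of_nonneg (ae_of_all _ fun x => rpow_nonneg (hh₀ x) q)
    (hint.const_mul _) (ae_of_all _ fun x => ?_)
  calc h x ^ q = h x ^ (q - 1) * h x := by
        rw [← rpow_add_one' (hh₀ x) (by linarith), sub_add_cancel]
    _ ≤ M ^ (q - 1) * h x :=
        mul_le_mul_of_nonneg_right (rpow_le_rpow (hh₀ x) (hhM x) (by linarith)) (hh₀ x)

variable [IsFiniteMeasure μ]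

lemma integral_mul_le_of_le_const {p M : ℝ} (hp : 1 < p) {f h : α → ℝ}
    (hf₀ : ∀ x, 0 ≤ f x) (hfm : AEStronglyMeasurable f μ)
    (hfp : Integrable (fun x => f x ^ p) μ) (hhm : AEStronglyMeasurable h μ)
    (hh₀ : ∀ x, 0 ≤ h x) (hhM : ∀ x, h x ≤ M) (hM : 0 ≤ M) :
    ∫ x, f x * h x ∂μ ≤
      M ^ (1 / p) * (∫ x, f x ^ p ∂μ) ^ (1 / p) * (∫ x, h x ∂μ) ^ ((p - 1) / p) := by
  set q := p.conjExponent
  have hpq : p.HolderConjugate q := .conjExponent hp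
  have hf : MemLp f (ENNReal.ofReal p) μ := by
    refine (integrable_norm_rpow_iff hfm (by simpa using hpq.pos) ENNReal.ofReal_ne_top).1
      (hfp.congr (ae_of_all _ fun x => ?_))
    dsimp only
    rw [Real.norm_of_nonneg (hf₀ x), ENNReal.toReal_ofReal hpq.nonneg]
  have hh : MemLp h ⊤ μ :=
    memLp_top_of_bound hhm M (ae_of_all _ fun x => (Real.norm_of_nonneg (hh₀ x)).trans_le (hhM x))
  have hp₁ : p - 1 ≠ 0 := by linarith
  have hq : 1 / q = (p - 1) / p := by
    simp only [q, Real.conjExponent]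
    field_simp
  have hq' : (q - 1) * ((p - 1) / p) = 1 / p := by
    simp only [q, Real.conjExponent]
    field_simp
    ring
  calc ∫ x, f x * h x ∂μ ≤ (∫ x, f x ^ p ∂μ) ^ (1 / p) * (∫ x, h x ^ q ∂μ) ^ (1 / q) :=
        integral_mul_le_Lp_mul_Lq_of_nonneg hpq (ae_of_all _ hf₀) (ae_of_all _ hh₀) hf
          (hh.mono_exponent le_top)
    _ ≤ (∫ x, f x ^ p ∂μ) ^ (1 / p) * (M ^ (q - 1) * ∫ x, h x ∂μ) ^ (1 / q) := by
        refine mul_le_mul_of_nonneg_left (rpow_le_rpow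
          (integral_nonneg fun x => rpow_nonneg (hh₀ x) q)
          (integral_rpow_le_mul_integral_of_le hpq.symm.lt.le hh₀ hhM (hh.integrable le_top))
          (one_div_nonneg.2 hpq.symm.nonneg)) (rpow_nonneg ?_ _)
        exact integral_nonneg fun x => rpow_nonneg (hf₀ x) p
    _ = M ^ (1 / p) * (∫ x, f x ^ p ∂μ) ^ (1 / p) * (∫ x, h x ∂μ) ^ ((p - 1) / p) := by
        rw [mul_rpow (rpow_nonneg hM _) (integral_nonneg hh₀), ← rpow_mul hM,
          hq, hq']
        ring

lemma integral_one_sub_cos_le_setIntegral_sin_mul_measureReal {φ : α → ℝ} (hφ : Measurable φ) :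
    ∫ x, (1 - cos (φ x)) ∂μ ≤ ∫ t in Ioc 0 π, sin t * μ.real {x | t ≤ |φ x|} := by
  set W : α → ℝ → ℝ := fun x t => (Iic |φ x|).indicator sin t
  have hW : Integrable (Function.uncurry W) (μ.prod (volume.restrict (Ioc 0 π))) := by
    have hm : Measurable (Function.uncurry W) :=
      (continuous_sin.measurable.comp measurable_snd).indicator
        (measurableSet_le measurable_snd (hφ.comp measurable_fst).abs)
    refine Integrable.of_bound hm.aestronglyMeasurable 1 (ae_of_all _ fun z => ?_)
    exact (norm_indicator_le_norm_self _ _).trans (abs_sin_le_one _)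
  calc ∫ x, (1 - cos (φ x)) ∂μ ≤ ∫ x, (∫ t in Ioc 0 π, W x t) ∂μ := by
        refine integral_mono_of_nonneg (ae_of_all _ fun x => sub_nonneg.2 (cos_le_one _))
          hW.integral_prod_left (ae_of_all _ fun x => ?_)
        dsimp only
        rw [← cos_abs]
        exact one_sub_cos_le_setIntegral_indicator_sin (abs_nonneg _)
    _ = ∫ t in Ioc 0 π, ∫ x, W x t ∂μ := integral_integral_swap hW
    _ = ∫ t in Ioc 0 π, sin t * μ.real {x | t ≤ |φ x|} := by
        refine integral_congr_ae (ae_of_all _ fun t => ?_)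
        dsimp only
        rw [mul_comm, ← smul_eq_mul, ← integral_indicator_const _
          (measurableSet_le measurable_const hφ.abs)]
        rfl

lemma integral_one_sub_cos_le_of_weakType {φ : α → ℝ} (hφ : Measurable φ) {c : ℝ} (hc : 0 ≤ c)
    (hweak : ∀ t > 0, μ {x | t ≤ |φ x|} ≤ ENNReal.ofReal (c / t)) :
    ∫ x, (1 - cos (φ x)) ∂μ ≤ c * ∫ t in 0..π, sin t / t := by
  have hsinc : IntegrableOn (fun t => sin t / t) (Ioc 0 π) :=
    (continuous_sinc.integrableOn_Icc.mono_set Ioc_subset_Icc_self).congr_fun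
      (fun t ht => sinc_of_ne_zero ht.1.ne') measurableSet_Ioc
  rw [intervalIntegral.integral_of_le pi_pos.le, ← integral_const_mul]
  refine (integral_one_sub_cos_le_setIntegral_sin_mul_measureReal hφ).trans
    (integral_mono_of_nonneg ?_ (hsinc.const_mul c) ?_) <;>
    filter_upwards [ae_restrict_mem measurableSet_Ioc] with t ⟨ht, htπ⟩
  · exact mul_nonneg (sin_nonneg_of_nonneg_of_le_pi ht.le htπ) measureReal_nonneg
  · calc sin t * μ.real {x | t ≤ |φ x|} ≤ sin t * (c / t) := by
          gcongr
          · exact sin_nonneg_of_nonneg_of_le_pi ht.le htπ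
          · exact ENNReal.toReal_le_of_le_ofReal (div_nonneg hc ht.le) (hweak t ht)
      _ = c * (sin t / t) := by ring

lemma integral_mul_one_sub_cos_le_of_weakType {p c : ℝ} (hp : 1 < p) {f φ : α → ℝ}
    (hf₀ : ∀ x, 0 ≤ f x) (hfm : AEStronglyMeasurable f μ)
    (hfp : Integrable (fun x => f x ^ p) μ) (hφ : Measurable φ) (hc : 0 ≤ c)
    (hweak : ∀ t > 0, μ {x | t ≤ |φ x|} ≤ ENNReal.ofReal (c / t)) :
    ∫ x, f x * (1 - cos (φ x)) ∂μ ≤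
      2 ^ (1 / p) * (∫ x, f x ^ p ∂μ) ^ (1 / p) *
        (c * ∫ t in 0..π, sin t / t) ^ ((p - 1) / p) := by
  refine (integral_mul_le_of_le_const (h := fun x => 1 - cos (φ x)) hp hf₀ hfm hfp
    (measurable_const.sub (measurable_cos.comp hφ)).aestronglyMeasurable
    (fun x => sub_nonneg.2 (cos_le_one _)) (fun x => by linarith [neg_one_le_cos (φ x)])
    zero_le_two).trans ?_
  gcongr
  · exact mul_nonneg (by positivity) (rpow_nonneg (integral_nonneg fun x => rpow_nonneg (hf₀ x) p) _)
  · exact integral_nonneg fun x => sub_nonneg.2 (cos_le_one _)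
  · exact integral_one_sub_cos_le_of_weakType hφ hc hweak

end Integrals

-- Hölder's inequality already yields the constant `2^((p+1)/p) b^((p-1)/p)`; the remaining
-- factor `(p/(p-1))^((p-1)/p)` is `≥ 1`.
lemma two_mul_rpow_mul_le {p a b c : ℝ} (hp : 1 < p) (ha : 0 ≤ a) (hb : 0 ≤ b) (hc : 0 ≤ c) :
    2 * (2 ^ (1 / p) * a ^ (1 / p) * (b * c) ^ ((p - 1) / p)) ≤
      2 ^ ((p + 1) / p) * b ^ ((p - 1) / p) * (p / (p - 1)) ^ ((p - 1) / p) *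
        a ^ (1 / p) * c ^ ((p - 1) / p) := by
  have h2 : 2 * 2 ^ (1 / p) = (2 : ℝ) ^ ((p + 1) / p) := by
    rw [add_div, div_self (by positivity), Real.rpow_add two_pos, Real.rpow_one]
  have hq : 1 ≤ (p / (p - 1)) ^ ((p - 1) / p) :=
    Real.one_le_rpow ((one_le_div (by linarith)).2 (by linarith)) (by bound)
  calc 2 * (2 ^ (1 / p) * a ^ (1 / p) * (b * c) ^ ((p - 1) / p))
      = 2 ^ ((p + 1) / p) * b ^ ((p - 1) / p) * 1 * a ^ (1 / p) * c ^ ((p - 1) / p) := by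
        rw [Real.mul_rpow hb hc, ← h2]
        ring
    _ ≤ _ := by gcongr

theorem stmt11_general (p : ℝ) (hp : 1 < p)
    (f g : ℝ → ℝ)
    (hf0 : ∀ θ, 0 ≤ f θ) (hg0 : ∀ θ, 0 ≤ g θ)
    (hf : IntegrableOn f (Ico (-Real.pi) Real.pi))
    (hg : IntegrableOn g (Ico (-Real.pi) Real.pi))
    (hfp : IntegrableOn (fun θ => f θ ^ p) (Ico (-Real.pi) Real.pi))
    (A B : ℝ → ℝ) (hA : Measurable A) (hB : Measurable B)
    (hweak : ∀ lam > (0 : ℝ),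
      volume {θ ∈ Ico (-Real.pi) Real.pi | lam ≤ |(A θ - B θ) / 2|} ≤
        ENNReal.ofReal ((kolmogorovK / lam) *
          ∫ θ in Ico (-Real.pi) Real.pi, |(Real.log (f θ) - Real.log (g θ)) / 2|))
    (F G : ℝ → ℂ)
    (hF : ∀ θ, F θ = (Real.sqrt (f θ) : ℂ) * Complex.exp (Complex.I * (A θ : ℂ) / 2))
    (hG : ∀ θ, G θ = (Real.sqrt (g θ) : ℂ) * Complex.exp (Complex.I * (B θ : ℂ) / 2)) :
    ∫ θ in Ico (-Real.pi) Real.pi, ‖F θ - G θ‖ ^ 2 ≤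
      2 * (∫ θ in Ico (-Real.pi) Real.pi, |f θ - g θ|) +
      (2 ^ ((p + 1) / p) *
          (kolmogorovK / 2 * ∫ lam in (0 : ℝ)..Real.pi, Real.sin lam / lam) ^ ((p - 1) / p) *
          (p / (p - 1)) ^ ((p - 1) / p)) *
        (∫ θ in Ico (-Real.pi) Real.pi, f θ ^ p) ^ (1 / p) *
        (∫ θ in Ico (-Real.pi) Real.pi,
            |Real.log (f θ) - Real.log (g θ)|) ^ ((p - 1) / p) := by
  set s := Ico (-Real.pi) Real.pi
  have : IsFiniteMeasure (volume.restrict s) := isFiniteMeasure_restrict.2 measure_Ico_lt_top.ne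
  set I := ∫ t in (0 : ℝ)..Real.pi, Real.sin t / t
  set L := ∫ θ in s, |Real.log (f θ) - Real.log (g θ)|
  set P := ∫ θ in s, f θ ^ p
  have hFG : ∀ θ, F θ - G θ = (√(f θ) : ℂ) * Complex.exp (Complex.I * ↑(A θ / 2)) -
      (√(g θ) : ℂ) * Complex.exp (Complex.I * ↑(B θ / 2)) := fun θ => by
    rw [hF, hG]
    push_cast
    ring_nf
  have hweak' : ∀ t > 0, volume.restrict s {θ | t ≤ |A θ / 2 - B θ / 2|} ≤
      ENNReal.ofReal (kolmogorovK * (L / 2) / t) := fun t ht => by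
    have hL : ∫ θ in s, |(Real.log (f θ) - Real.log (g θ)) / 2| = L / 2 := by
      simp_rw [abs_div, abs_two]
      exact integral_div _ _
    have := hweak t ht
    rw [hL, ofPred_and, ofPred_mem_eq] at this
    rw [Measure.restrict_apply' measurableSet_Ico, inter_comm, ← div_mul_eq_mul_div]
    simpa only [sub_div] using this
  have hI : 0 ≤ I := intervalIntegral.integral_nonneg Real.pi_pos.le fun t ht =>
    div_nonneg (Real.sin_nonneg_of_nonneg_of_le_pi ht.1 ht.2) ht.1
  have hL : 0 ≤ L := integral_nonneg fun _ => abs_nonneg _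
  calc ∫ θ in s, ‖F θ - G θ‖ ^ 2
      ≤ 2 * (∫ θ in s, |f θ - g θ|) + 2 * ∫ θ in s, f θ * (1 - Real.cos (A θ / 2 - B θ / 2)) := by
        simp_rw [hFG]
        exact integral_norm_sqrt_mul_exp_sub_sq_le hf0 hg0 hf hg (hA.div_const 2) (hB.div_const 2)
    _ ≤ 2 * (∫ θ in s, |f θ - g θ|) +
          2 * (2 ^ (1 / p) * P ^ (1 / p) * (kolmogorovK * (L / 2) * I) ^ ((p - 1) / p)) := by
        gcongr
        exact integral_mul_one_sub_cos_le_of_weakType hp hf0 hf.aestronglyMeasurable hfp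
          ((hA.div_const 2).sub (hB.div_const 2)) (mul_nonneg kolmogorovK_nonneg (by positivity)) hweak'
    _ ≤ _ := by
        rw [show kolmogorovK * (L / 2) * I = kolmogorovK / 2 * I * L by ring]
        exact add_le_add le_rfl (two_mul_rpow_mul_le hp
          (integral_nonneg fun θ => Real.rpow_nonneg (hf0 θ) p)
          (mul_nonneg (div_nonneg kolmogorovK_nonneg zero_le_two) hI) hL)

/-- Corollary (Lᵖ version): for `p ∈ (1, ∞)` and
`C(p) = 2^{(p+1)/p} K₀^{(p−1)/p} (p/(p−1))^{(p−1)/p}`,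
`‖f⁺ − g⁺‖²_{H²} ≤ 2‖f − g‖_{L¹} + C(p)‖f‖_{Lᵖ}‖log f − log g‖_{L¹}^{(p−1)/p}`.
`F, G` are the boundary values of `f⁺, g⁺` with `A = (log f)~`, `B = (log g)~`,
and `kolmogorovK` is the Kolmogorov weak (1,1) constant, hypothesized for
`½(log f − log g)` and its conjugate `½(A − B)`; `K₀ = (kolmogorovK/2)∫₀^π sin λ/λ dλ`. -/
theorem stmt11 (p : ℝ) (hp : 1 < p)
    (f g : ℝ → ℝ)
    (hf0 : ∀ θ, 0 ≤ f θ) (hg0 : ∀ θ, 0 ≤ g θ)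
    (hf : IntegrableOn f (Ico (-Real.pi) Real.pi))
    (hg : IntegrableOn g (Ico (-Real.pi) Real.pi))
    (hfp : IntegrableOn (fun θ => f θ ^ p) (Ico (-Real.pi) Real.pi))
    (hlogf : IntegrableOn (fun θ => Real.log (f θ)) (Ico (-Real.pi) Real.pi))
    (hlogg : IntegrableOn (fun θ => Real.log (g θ)) (Ico (-Real.pi) Real.pi))
    (A B : ℝ → ℝ) (hA : Measurable A) (hB : Measurable B)
    (hweak : ∀ lam > (0 : ℝ),
      volume {θ ∈ Ico (-Real.pi) Real.pi | lam ≤ |(A θ - B θ) / 2|} ≤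
        ENNReal.ofReal ((kolmogorovK / lam) *
          ∫ θ in Ico (-Real.pi) Real.pi, |(Real.log (f θ) - Real.log (g θ)) / 2|))
    (F G : ℝ → ℂ)
    (hF : ∀ θ, F θ = (Real.sqrt (f θ) : ℂ) * Complex.exp (Complex.I * (A θ : ℂ) / 2))
    (hG : ∀ θ, G θ = (Real.sqrt (g θ) : ℂ) * Complex.exp (Complex.I * (B θ : ℂ) / 2)) :
    ∫ θ in Ico (-Real.pi) Real.pi, ‖F θ - G θ‖ ^ 2 ≤
      2 * (∫ θ in Ico (-Real.pi) Real.pi, |f θ - g θ|) +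
      (2 ^ ((p + 1) / p) *
          (kolmogorovK / 2 * ∫ lam in (0 : ℝ)..Real.pi, Real.sin lam / lam) ^ ((p - 1) / p) *
          (p / (p - 1)) ^ ((p - 1) / p)) *
        (∫ θ in Ico (-Real.pi) Real.pi, f θ ^ p) ^ (1 / p) *
        (∫ θ in Ico (-Real.pi) Real.pi,
            |Real.log (f θ) - Real.log (g θ)|) ^ ((p - 1) / p) :=
  stmt11_general p hp f g hf0 hg0 hf hg hfp A B hA hB hweak F G hF hG
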